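/- arXiv:1811.11419 — 8 statements merged into one kernel-verified Lean document; each statement's English description precedes it below -/
import Mathlib

section
/- The function h(u) = u - ln(u) is strictly increasing on [1, ∞), and its inverse h⁻¹, defined on [1, ∞), satisfies h⁻¹(x) ≤ x + ln(x + √(2(x-1))) for all x ≥ 1. -/
lemma exp_quad {s : ℝ} (hs : 0 ≤ s) : 1 + s + s^2/2 ≤ Real.exp s := by
  have := Real.sum_le_exp_of_nonneg hs 3
  simp [Finset.sum_range_succ, Nat.factorial] at this
  nlinarith [this]

/-- The function `h(u) = u - ln u` is strictly increasing on `[1, ∞)`, and its inverse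
`hinv` (characterized by `hinv x ≥ 1` and `h (hinv x) = x` for `x ≥ 1`) satisfies
`hinv x ≤ x + ln (x + √(2(x-1)))` for all `x ≥ 1`. -/
theorem stmt0 (h hinv : ℝ → ℝ) (hh : ∀ u, h u = u - Real.log u)
    (hinv1 : ∀ x ≥ (1:ℝ), 1 ≤ hinv x) (hinv2 : ∀ x ≥ (1:ℝ), h (hinv x) = x) :
    StrictMonoOn h (Set.Ici 1) ∧
      ∀ x ≥ (1:ℝ), hinv x ≤ x + Real.log (x + Real.sqrt (2*(x-1))) := by
  have hmono : StrictMonoOn h (Set.Ici 1) := by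
    intro a ha b hb hab
    simp only [Set.mem_Ici] at ha hb
    rw [hh, hh]
    have ha0 : (0:ℝ) < a := by linarith
    have hb0 : (0:ℝ) < b := by linarith
    have h1 : Real.log b - Real.log a = Real.log (b/a) := (Real.log_div hb0.ne' ha0.ne').symm
    have h2 : Real.log (b/a) < b/a - 1 :=
      Real.log_lt_sub_one_of_pos (by positivity) (by
        intro hba
        have : b = a := by field_simp at hba; linarith
        linarith)
    have h3 : b/a - 1 ≤ b - a := by
      rw [div_sub_one ha0.ne']
      rw [div_le_iff₀ ha0]
      nlinarith
    linarith
  refine ⟨hmono, fun x hx => ?_⟩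
  set s := Real.sqrt (2*(x-1)) with hs
  have hs0 : 0 ≤ s := Real.sqrt_nonneg _
  have hs2 : s^2 = 2*(x-1) := Real.sq_sqrt (by linarith)
  set t := x + s with ht
  have ht1 : 1 ≤ t := by simp only [ht]; linarith
  have ht0 : 0 < t := by linarith
  have hlt : Real.log t ≥ 0 := Real.log_nonneg ht1
  set y := x + Real.log t with hy
  have hy1 : 1 ≤ y := by linarith
  -- key: log t ≤ s
  have hkey : Real.log t ≤ s := by
    have : t ≤ Real.exp s := by
      have := exp_quad hs0
      have : 1 + s + s^2/2 ≤ Real.exp s := this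
      nlinarith
    calc Real.log t ≤ Real.log (Real.exp s) := Real.log_le_log ht0 this
      _ = s := Real.log_exp s
  -- h y ≥ x
  have hhy : x ≤ h y := by
    rw [hh]
    have hyt : y ≤ t := by simp only [hy, ht]; linarith
    have : Real.log y ≤ Real.log t := Real.log_le_log (by linarith) hyt
    linarith
  by_contra hcon
  push_neg at hcon
  have := hmono (Set.mem_Ici.2 hy1) (Set.mem_Ici.2 (hinv1 x hx)) hcon
  rw [hinv2 x hx] at this
  linarith
end

section
/- For every x ≥ 0, the infimum over q ∈ (0,1) of (x - ln(1-q))/q equals h⁻¹(1 + x), where h(u) = u - ln u on [1,∞). -/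
/-!
Put `u = h⁻¹(1 + x) ≥ 1`, so that `x = u - 1 - log u`. The inequality `log t ≤ t - 1` at
`t = (1 - q) u` reads `q u ≤ x - log (1 - q)`, so `u` is a lower bound, with equality at
`q = 1 - 1/u`. When `u = 1` this point leaves `(0, 1)`, and `u` is instead the limit of
`-log (1 - q) / q` as `q → 0⁺`, i.e. minus the derivative of `log (1 - q)` at `0`.
-/

open Real Set Filter Topology

lemma mul_le_sub_one_sub_log_sub_log_one_sub {u q : ℝ} (hu : 0 < u) (hq : q < 1) :
    q * u ≤ u - 1 - log u - log (1 - q) := by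
  have h := log_le_sub_one_of_pos (mul_pos (sub_pos.2 hq) hu)
  rw [log_mul (sub_pos.2 hq).ne' hu.ne'] at h
  linarith

lemma le_sub_one_sub_log_sub_log_one_sub_div {u q : ℝ} (hu : 0 < u) (hq : q ∈ Ioo (0 : ℝ) 1) :
    u ≤ (u - 1 - log u - log (1 - q)) / q := by
  rw [le_div_iff₀ hq.1, mul_comm]
  exact mul_le_sub_one_sub_log_sub_log_one_sub hu hq.2

lemma sub_one_sub_log_sub_log_one_sub_div_eq_self {u : ℝ} (hu : 1 < u) :
    (u - 1 - log u - log (1 - (1 - u⁻¹))) / (1 - u⁻¹) = u := by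
  have hu0 : u ≠ 0 := by positivity
  have hden : 1 - u⁻¹ ≠ 0 := sub_ne_zero.2 (inv_lt_one_of_one_lt₀ hu).ne'
  rw [sub_sub_cancel, log_inv, sub_neg_eq_add, sub_add_cancel, div_eq_iff hden, mul_sub,
    mul_inv_cancel₀ hu0, mul_one]

lemma tendsto_neg_log_one_sub_div_nhdsGT_zero :
    Tendsto (fun q : ℝ => -log (1 - q) / q) (𝓝[>] 0) (𝓝 1) := by
  have h : HasDerivAt (fun q : ℝ => log (1 - q)) (-1) 0 := by
    simpa using ((hasDerivAt_id (0:ℝ)).const_sub 1).log (by norm_num)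
  convert h.tendsto_slope_zero_right.neg using 2 with q
  · simp [div_eq_inv_mul]
  · norm_num

lemma isGLB_sub_one_sub_log_sub_log_one_sub_div {u : ℝ} (hu : 1 ≤ u) :
    IsGLB {v : ℝ | ∃ q ∈ Ioo (0 : ℝ) 1, v = (u - 1 - log u - log (1 - q)) / q} u := by
  refine isGLB_of_mem_closure ?_ ?_
  · rintro v ⟨q, hq, rfl⟩
    exact le_sub_one_sub_log_sub_log_one_sub_div (by linarith) hq
  rcases hu.eq_or_lt with rfl | hu
  · refine mem_closure_of_tendsto (by simpa using tendsto_neg_log_one_sub_div_nhdsGT_zero) ?_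
    filter_upwards [Ioo_mem_nhdsGT (zero_lt_one' ℝ)] with q hq
    exact ⟨q, hq, by simp⟩
  · refine subset_closure ⟨1 - u⁻¹, ⟨?_, ?_⟩, (sub_one_sub_log_sub_log_one_sub_div_eq_self hu).symm⟩
    · simpa using inv_lt_one_of_one_lt₀ hu
    · simpa using zero_lt_one.trans hu

/-- For every `x ≥ 0`, the infimum over `q ∈ (0,1)` of `(x - ln(1-q))/q` equals
`h⁻¹(1+x)`, where `h(u) = u - ln u` on `[1,∞)`. -/
theorem stmt1 (x : ℝ) (hx : 0 ≤ x) (h hinv : ℝ → ℝ)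
    (hh : ∀ u, h u = u - Real.log u)
    (hinv1 : ∀ y ≥ (1:ℝ), 1 ≤ hinv y ∧ h (hinv y) = y) :
    IsGLB {v : ℝ | ∃ q ∈ Set.Ioo (0:ℝ) 1, v = (x - Real.log (1 - q))/q} (hinv (1+x)) := by
  obtain ⟨hu, hhu⟩ := hinv1 (1 + x) (by linarith)
  rw [hh] at hhu
  have hx_eq : x = hinv (1 + x) - 1 - log (hinv (1 + x)) := by linarith
  simpa only [← hx_eq] using isGLB_sub_one_sub_log_sub_log_one_sub_div hu
end

section
/- Fix z ∈ [1, e] and x ≥ 0, and define h̃_z(x) = min over y ∈ [1,z] of y·(x - ln ln y). Then h̃_z(x) = exp(1/h⁻¹(x))·h⁻¹(x) if x ≥ h(1/ln z), and h̃_z(x) = z·(x - ln ln z) otherwise. -/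
/-!
Write `F y = y (x - log log y)` and `h u = u - log u`. For `y > 1` one has
`F' y = x - h (1 / log y)`; since `h` increases on `[1, ∞)` and `1 / log y` decreases from `∞`
to `1` on `(1, e]`, the derivative changes sign at most once, from negative to positive.
If `x ≥ h (1 / log z)` it vanishes at `y* = exp (1 / h⁻¹ x) ∈ (1, z]`, where
`F y* = y* (x + log h⁻¹ x) = y* h⁻¹ x`; otherwise `F` decreases on all of `(1, z]`.
-/

open Real Set

theorem isLeast_image_Ioc_of_antitoneOn_of_monotoneOn {α β : Type*} [LinearOrder α]
    [Preorder β] {f : α → β} {a b c : α} (hc : c ∈ Ioc a b)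
    (hanti : AntitoneOn f (Ioc a c)) (hmono : MonotoneOn f (Icc c b)) :
    IsLeast (f '' Ioc a b) (f c) := by
  refine ⟨mem_image_of_mem f hc, ?_⟩
  rintro _ ⟨y, ⟨hay, hyb⟩, rfl⟩
  rcases le_total y c with hyc | hcy
  · exact hanti ⟨hay, hyc⟩ ⟨hc.1, le_rfl⟩ hyc
  · exact hmono ⟨le_rfl, hc.2⟩ ⟨hcy, hyb⟩ hcy

theorem strictMonoOn_sub_log : StrictMonoOn (fun u : ℝ => u - log u) (Ici 1) := by
  intro a (ha : 1 ≤ a) b _ hab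
  have ha0 : 0 < a := by linarith
  have hlog : log (b / a) < b / a - 1 :=
    log_lt_sub_one_of_pos (div_pos (by linarith) ha0) ((one_lt_div ha0).mpr hab).ne'
  have hdiv : b / a - 1 ≤ b - a := by
    rw [div_sub_one ha0.ne', div_le_iff₀ ha0]
    nlinarith
  rw [log_div (by linarith) ha0.ne'] at hlog
  show a - log a < b - log b
  linarith

theorem one_le_sub_log {u : ℝ} (hu : 1 ≤ u) : 1 ≤ u - log u := by
  simpa using strictMonoOn_sub_log.monotoneOn self_mem_Ici hu hu

theorem one_le_inv_log {y : ℝ} (hy : y ∈ Ioc 1 (exp 1)) : 1 ≤ (log y)⁻¹ :=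
  one_le_inv₀ (log_pos hy.1) |>.mpr <| by simpa using log_le_log (by linarith [hy.1]) hy.2

theorem antitoneOn_inv_log_sub_log_inv_log :
    AntitoneOn (fun w => (log w)⁻¹ - log (log w)⁻¹) (Ioc 1 (exp 1)) :=
  fun v hv w hw hvw => strictMonoOn_sub_log.monotoneOn (one_le_inv_log hw) (one_le_inv_log hv)
    (inv_anti₀ (log_pos hv.1) (log_le_log (by linarith [hv.1]) hvw))

section Objective

variable (x : ℝ)

theorem hasDerivAt_mul_sub_log_log {w : ℝ} (hw : 1 < w) :
    HasDerivAt (fun y => y * (x - log (log y))) (x - ((log w)⁻¹ - log (log w)⁻¹)) w := by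
  have hw0 : w ≠ 0 := by positivity
  have hlw : log w ≠ 0 := (log_pos hw).ne'
  have hloglog : HasDerivAt (fun y => log (log y)) ((log w)⁻¹ * w⁻¹) w :=
    (hasDerivAt_log hlw).comp w (hasDerivAt_log hw0)
  refine ((hasDerivAt_id w).mul (hloglog.const_sub x)).congr_deriv ?_
  rw [log_inv, id]
  field_simp
  ring

theorem continuousOn_mul_sub_log_log :
    ContinuousOn (fun y => y * (x - log (log y))) (Ioi 1) := fun _ hw =>
  (hasDerivAt_mul_sub_log_log x hw).continuousAt.continuousWithinAt

theorem antitoneOn_mul_sub_log_log {a b : ℝ} (ha : 1 ≤ a)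
    (hd : ∀ w ∈ Ioo a b, x ≤ (log w)⁻¹ - log (log w)⁻¹) :
    AntitoneOn (fun y => y * (x - log (log y))) (Ioc a b) := by
  have hsub : Ioc a b ⊆ Ioi 1 := fun w hw => lt_of_le_of_lt ha hw.1
  refine antitoneOn_of_deriv_nonpos (convex_Ioc a b)
    ((continuousOn_mul_sub_log_log x).mono hsub) (fun w hw => ?_) (fun w hw => ?_)
  all_goals
    rw [interior_Ioc] at hw
    have hw1 : 1 < w := hsub (Ioo_subset_Ioc_self hw)
  · exact (hasDerivAt_mul_sub_log_log x hw1).differentiableAt.differentiableWithinAt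
  · rw [(hasDerivAt_mul_sub_log_log x hw1).deriv]
    linarith [hd w hw]

theorem monotoneOn_mul_sub_log_log {a b : ℝ} (ha : 1 < a)
    (hd : ∀ w ∈ Ioo a b, (log w)⁻¹ - log (log w)⁻¹ ≤ x) :
    MonotoneOn (fun y => y * (x - log (log y))) (Icc a b) := by
  have hsub : Icc a b ⊆ Ioi 1 := fun w hw => lt_of_lt_of_le ha hw.1
  refine monotoneOn_of_deriv_nonneg (convex_Icc a b)
    ((continuousOn_mul_sub_log_log x).mono hsub) (fun w hw => ?_) (fun w hw => ?_)
  all_goals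
    rw [interior_Icc] at hw
    have hw1 : 1 < w := hsub (Ioo_subset_Icc_self hw)
  · exact (hasDerivAt_mul_sub_log_log x hw1).differentiableAt.differentiableWithinAt
  · rw [(hasDerivAt_mul_sub_log_log x hw1).deriv]
    linarith [hd w hw]

theorem isLeast_image_mul_sub_log_log_exp_inv {z t : ℝ} (hz : z ∈ Ioc 1 (exp 1)) (ht : 1 ≤ t)
    (htz : (log z)⁻¹ ≤ t) (htx : t - log t = x) :
    IsLeast ((fun y => y * (x - log (log y))) '' Ioc 1 z) (exp t⁻¹ * t) := by
  have hlogc : (log (exp t⁻¹))⁻¹ = t := by rw [log_exp, inv_inv]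
  have hc1 : 1 < exp t⁻¹ := one_lt_exp_iff.mpr (by positivity)
  have hcz : exp t⁻¹ ≤ z := by
    rw [← exp_log (by linarith [hz.1] : 0 < z), exp_le_exp]
    exact inv_le_of_inv_le₀ (log_pos hz.1) htz
  have hce : exp t⁻¹ ≤ exp 1 := hcz.trans hz.2
  have hmin : exp t⁻¹ * (x - log (log (exp t⁻¹))) = exp t⁻¹ * t := by
    rw [log_exp, log_inv, sub_neg_eq_add, ← htx, sub_add_cancel]
  rw [← hmin]
  refine isLeast_image_Ioc_of_antitoneOn_of_monotoneOn ⟨hc1, hcz⟩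
    (antitoneOn_mul_sub_log_log x le_rfl fun w hw => ?_)
    (monotoneOn_mul_sub_log_log x hc1 fun w hw => ?_)
  · calc x = (log (exp t⁻¹))⁻¹ - log (log (exp t⁻¹))⁻¹ := by rw [hlogc, htx]
      _ ≤ _ := antitoneOn_inv_log_sub_log_inv_log ⟨hw.1, hw.2.le.trans hce⟩ ⟨hc1, hce⟩ hw.2.le
  · calc _ ≤ (log (exp t⁻¹))⁻¹ - log (log (exp t⁻¹))⁻¹ :=
          antitoneOn_inv_log_sub_log_inv_log ⟨hc1, hce⟩
            ⟨hc1.trans hw.1, hw.2.le.trans hz.2⟩ hw.1.le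
      _ = x := by rw [hlogc, htx]

theorem isLeast_image_mul_sub_log_log_right {z : ℝ} (hz : z ∈ Ioc 1 (exp 1))
    (hxz : x ≤ (log z)⁻¹ - log (log z)⁻¹) :
    IsLeast ((fun y => y * (x - log (log y))) '' Ioc 1 z) (z * (x - log (log z))) := by
  refine isLeast_image_Ioc_of_antitoneOn_of_monotoneOn ⟨hz.1, le_rfl⟩
    (antitoneOn_mul_sub_log_log x le_rfl fun w hw => ?_) ?_
  · exact hxz.trans
      (antitoneOn_inv_log_sub_log_inv_log ⟨hw.1, hw.2.le.trans hz.2⟩ hz hw.2.le)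
  · rw [Icc_self]
    exact subsingleton_singleton.monotoneOn _

end Objective

theorem stmt2_general (z x : ℝ) (hz : z ∈ Set.Ioc (1:ℝ) (Real.exp 1))
    (h hinv : ℝ → ℝ) (hh : ∀ u, h u = u - Real.log u)
    (hinv1 : ∀ y ≥ (1:ℝ), 1 ≤ hinv y ∧ h (hinv y) = y) :
    IsLeast ((fun y => y * (x - Real.log (Real.log y))) '' Set.Ioc 1 z)
      (if h (1/Real.log z) ≤ x then Real.exp (1/hinv x) * hinv x
       else z * (x - Real.log (Real.log z))) := by
  simp only [hh, one_div] at hinv1 ⊢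
  split_ifs with hcase
  · obtain ⟨ht1, htx⟩ := hinv1 x (le_trans (one_le_sub_log (one_le_inv_log hz)) hcase)
    have htz : (log z)⁻¹ ≤ hinv x :=
      (strictMonoOn_sub_log.le_iff_le (one_le_inv_log hz) ht1).mp (htx.symm ▸ hcase)
    exact isLeast_image_mul_sub_log_log_exp_inv x hz ht1 htz htx
  · exact isLeast_image_mul_sub_log_log_right x hz (not_le.mp hcase).le

/-- Fix `z ∈ (1, e]` and `x ≥ 0`. The minimum over `y ∈ (1, z]` of `y (x - ln ln y)`
equals `exp(1/h⁻¹(x)) h⁻¹(x)` if `x ≥ h(1/ln z)`, and `z (x - ln ln z)` otherwise,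
where `h(u) = u - ln u` with inverse `hinv` on `[1,∞)`. -/
theorem stmt2 (z x : ℝ) (hz : z ∈ Set.Ioc (1:ℝ) (Real.exp 1)) (hx : 0 ≤ x)
    (h hinv : ℝ → ℝ) (hh : ∀ u, h u = u - Real.log u)
    (hinv1 : ∀ y ≥ (1:ℝ), 1 ≤ hinv y ∧ h (hinv y) = y) :
    IsLeast ((fun y => y * (x - Real.log (Real.log y))) '' Set.Ioc 1 z)
      (if h (1/Real.log z) ≤ x then Real.exp (1/hinv x) * hinv x
       else z * (x - Real.log (Real.log z))) :=
  stmt2_general z x hz h hinv hh hinv1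
end

section
/- For fixed z ∈ [0, e-1] and x ≥ 0, the infimum over ξ ∈ (0, z] and λ ∈ (0, 1/(1+ξ)) of (x - ln(1 - λ(1+ξ)))/λ + (1+ξ)·ln(2ζ(2)/(ln(1+ξ))²) equals 2·h̃_{1+z}((h⁻¹(1+x) + ln(2ζ(2)))/2). -/
/-- `h̃_z(x)`: the infimum over `y ∈ (1, z]` of `y (x - ln ln y)`. -/
noncomputable def htilde3 (z x : ℝ) : ℝ :=
  sInf ((fun y => y * (x - Real.log (Real.log y))) '' Set.Ioc 1 z)

/-!
The double infimum is computed from the inside out. For fixed `y = 1 + ξ`, substituting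
`t = λ y` turns the infimum over `λ` into `y · inf_{t ∈ (0,1)} (x - ln(1 - t))/t`, and this
infimum is `u = h⁻¹(1 + x)`: the bound `t u + ln(1 - t) ≤ u - ln u - 1 = x` is
`ln(u (1 - t)) ≤ u (1 - t) - 1`, with equality at `t = 1 - 1/u` (approached as `t → 0` when
`u = 1`). What remains is the infimum over `y ∈ (1, 1 + z]` of
`y u + y (ln(2ζ(2)) - 2 ln ln y) = 2 y ((u + ln(2ζ(2)))/2 - ln ln y)`.
-/

open Real Set

theorem isGLB_setOf_exists_add {ι α β : Type*} [AddCommGroup β] [PartialOrder β]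
    [IsOrderedAddMonoid β] {I : Set ι} {L : ι → Set α} {f : ι → α → β} {g m : ι → β} {b : β}
    (hm : ∀ i ∈ I, IsGLB (f i '' L i) (m i)) (hb : IsGLB ((fun i => m i + g i) '' I) b) :
    IsGLB {v | ∃ i ∈ I, ∃ l ∈ L i, v = f i l + g i} b := by
  refine ⟨?_, fun c hc => hb.2 ?_⟩
  · rintro _ ⟨i, hi, l, hl, rfl⟩
    exact (hb.1 (mem_image_of_mem _ hi)).trans
      (add_le_add_left ((hm i hi).1 (mem_image_of_mem _ hl)) _)
  · rintro _ ⟨i, hi, rfl⟩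
    have hci : c - g i ∈ lowerBounds (f i '' L i) := by
      rintro _ ⟨l, hl, rfl⟩
      exact sub_le_iff_le_add.2 (hc ⟨i, hi, l, hl, rfl⟩)
    exact sub_le_iff_le_add.1 ((hm i hi).2 hci)

theorem mul_add_log_one_sub_le {t u : ℝ} (hu : 0 < u) (ht : t < 1) :
    t * u + log (1 - t) ≤ u - log u - 1 := by
  have h := log_le_sub_one_of_pos (mul_pos hu (sub_pos.2 ht))
  rw [log_mul hu.ne' (sub_pos.2 ht).ne'] at h
  linarith

theorem isGLB_div_sub_log_one_sub_mul {x u y : ℝ} (hu : 1 ≤ u) (hxu : u - log u = 1 + x)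
    (hy : 0 < y) : IsGLB ((fun l => (x - log (1 - l * y)) / l) '' Ioo 0 (1 / y)) (y * u) := by
  have hmem {l : ℝ} (hl : 0 < l) (hly : l * y < 1) : l ∈ Ioo 0 (1 / y) :=
    ⟨hl, by rwa [lt_div_iff₀ hy]⟩
  refine ⟨?_, fun b hb => ?_⟩
  · rintro _ ⟨l, ⟨hl, hly⟩, rfl⟩
    rw [lt_div_iff₀ hy] at hly
    rw [le_div_iff₀ hl]
    nlinarith [mul_add_log_one_sub_le (by linarith : (0 : ℝ) < u) hly]
  rcases hu.eq_or_lt with rfl | hu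
  · -- `x = 0`: the values `-ln(1 - l y)/l ≤ y/(1 - l y)` come arbitrarily close to `y`
    have hx : x = 0 := by simp only [log_one] at hxu; linarith
    rw [mul_one]
    refine le_of_forall_pos_le_add fun ε hε => ?_
    set l := ε / (y * (y + ε)) with hl_def
    have hly : 1 - l * y = y / (y + ε) := by rw [hl_def]; field_simp; ring
    have hl : 0 < l := by positivity
    have hlog : -log (1 - l * y) ≤ l * (y + ε) := by
      have h := one_sub_inv_le_log_of_pos (show 0 < y / (y + ε) by positivity)
      have : (y + ε) / y - 1 = l * (y + ε) := by rw [hl_def]; field_simp; ring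
      rw [inv_div] at h
      rw [hly]
      linarith
    calc b ≤ (x - log (1 - l * y)) / l :=
          hb ⟨l, hmem hl (by rw [← sub_pos, hly]; positivity), rfl⟩
      _ ≤ y + ε := by rw [div_le_iff₀ hl, hx]; linarith
  · have hu0 : 0 < u := by linarith
    set l := (1 - u⁻¹) / y with hl_def
    have hly : 1 - l * y = u⁻¹ := by rw [hl_def]; field_simp; ring
    have hl : 0 < l := div_pos (sub_pos.2 (inv_lt_one_of_one_lt₀ hu)) hy
    refine (hb (mem_image_of_mem _ (hmem hl (by linarith [inv_pos.2 hu0])))).trans_eq ?_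
    rw [hly, log_inv, show x - -log u = u - 1 by linarith, hl_def]
    field_simp

theorem isGLB_htilde3 {z X : ℝ} (hz : 1 < z) (hze : z ≤ exp 1) (hX : 0 ≤ X) :
    IsGLB ((fun y => y * (X - log (log y))) '' Ioc 1 z) (htilde3 z X) := by
  refine isGLB_csInf ⟨_, mem_image_of_mem _ ⟨hz, le_rfl⟩⟩ ⟨0, ?_⟩
  rintro _ ⟨y, ⟨hy1, hyz⟩, rfl⟩
  have hlog : log (log y) ≤ 0 :=
    log_nonpos (log_pos hy1).le ((log_le_iff_le_exp (by linarith)).2 (hyz.trans hze))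
  exact mul_nonneg (by linarith) (by linarith)

/-- For fixed `z ∈ [0, e-1]` and `x ≥ 0`, the infimum over `ξ ∈ (0, z]` and
`λ ∈ (0, 1/(1+ξ))` of `(x - ln(1 - λ(1+ξ)))/λ + (1+ξ) ln(2ζ(2)/(ln(1+ξ))²)`
equals `2 h̃_{1+z}((h⁻¹(1+x) + ln(2ζ(2)))/2)`, where `ζ(2) = π²/6` and `h(u) = u - ln u`
with inverse `hinv`. -/
theorem stmt3 (z x : ℝ) (hz : z ∈ Set.Icc (0:ℝ) (Real.exp 1 - 1)) (hx : 0 ≤ x)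
    (hinv : ℝ → ℝ)
    (hinv1 : ∀ y ≥ (1:ℝ), 1 ≤ hinv y ∧ hinv y - Real.log (hinv y) = y) :
    sInf {v : ℝ | ∃ ξ ∈ Set.Ioc (0:ℝ) z, ∃ l ∈ Set.Ioo (0:ℝ) (1/(1+ξ)),
        v = (x - Real.log (1 - l*(1+ξ)))/l
            + (1+ξ) * Real.log (2*(Real.pi^2/6)/(Real.log (1+ξ))^2)} =
      2 * htilde3 (1+z) ((hinv (1+x) + Real.log (2*(Real.pi^2/6)))/2) := by
  obtain ⟨hz0, hze⟩ := hz
  obtain ⟨hu1, hu⟩ := hinv1 (1 + x) (by linarith)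
  set C : ℝ := 2 * (π ^ 2 / 6)
  set u := hinv (1 + x)
  have hC : 1 < C := by simp only [C]; nlinarith [pi_gt_three]
  rcases hz0.eq_or_lt with rfl | hz0
  · simp [htilde3]
  have hinner (ξ : ℝ) (hξ : ξ ∈ Ioc 0 z) :
      IsGLB ((fun l => (x - log (1 - l * (1 + ξ))) / l) '' Ioo 0 (1 / (1 + ξ))) ((1 + ξ) * u) :=
    isGLB_div_sub_log_one_sub_mul hu1 hu (by linarith [hξ.1])
  have houter : IsGLB ((fun ξ => (1 + ξ) * u + (1 + ξ) * log (C / log (1 + ξ) ^ 2)) '' Ioc 0 z)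
      (2 * htilde3 (1 + z) ((u + log C) / 2)) := by
    have h := (isGLB_htilde3 (z := 1 + z) (X := (u + log C) / 2) (by linarith) (by linarith)
      (by linarith [log_pos hC])).mul_left zero_le_two
    rw [image_image, show Ioc (1 : ℝ) (1 + z) = (1 + ·) '' Ioc 0 z by
      rw [image_const_add_Ioc, add_zero], image_image] at h
    refine (congrArg (IsGLB · _) (image_congr fun ξ hξ => ?_)).mpr h
    rw [log_div (by linarith) (pow_ne_zero 2 (log_pos (by linarith [hξ.1])).ne'), log_pow]
    ring
  have hA := isGLB_setOf_exists_add hinner houter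
  exact hA.csInf_eq hA.nonempty
end

section
/- Let g : Λ → ℝ⁺ be defined on an interval Λ of positive reals, define C^g(x) = inf_{λ∈Λ} (g(λ)+x)/λ for x > 0, and g*(x) = sup_{λ∈Λ} (λx - g(λ)). If g* is strictly increasing on ℝ⁺, then for all u in the range g*(ℝ⁺), C^g(u) = (g*)⁻¹(u). -/
/-- Let `g : Λ → ℝ⁺` on an interval `Λ` of positive reals, `C^g(x) = inf_{λ∈Λ} (g(λ)+x)/λ`
and `g*(x) = sup_{λ∈Λ} (λ x - g(λ))`. If `g*` is strictly increasing on `ℝ⁺`, then for all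
`u` in the range `g*(ℝ⁺)`, `C^g(u) = (g*)⁻¹(u)`. -/
theorem stmt5 (Λ : Set ℝ) (hΛpos : Λ ⊆ Set.Ioi 0) (hΛconn : Λ.OrdConnected)
    (g : ℝ → ℝ) (hg : ∀ l ∈ Λ, 0 ≤ g l) :
    let Cg : ℝ → ℝ := fun x => sInf ((fun l => (g l + x)/l) '' Λ)
    let gstar : ℝ → ℝ := fun x => sSup ((fun l => l*x - g l) '' Λ)
    StrictMonoOn gstar (Set.Ioi 0) →
      ∀ u ∈ gstar '' Set.Ioi 0, Cg u = Function.invFunOn gstar (Set.Ioi 0) u := by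
  intro Cg gstar hmono u hu
  obtain ⟨x, hx, rfl⟩ := hu
  have hx' : (0:ℝ) < x := hx
  have hΛne : Λ.Nonempty := by
    by_contra h
    rw [Set.not_nonempty_iff_eq_empty] at h
    have h1 : gstar 1 = 0 := by simp [gstar, h, Real.sSup_empty]
    have h2 : gstar 2 = 0 := by simp [gstar, h, Real.sSup_empty]
    have := hmono (by norm_num : (1:ℝ) ∈ Set.Ioi 0) (by norm_num : (2:ℝ) ∈ Set.Ioi 0) (by norm_num)
    rw [h1, h2] at this; exact lt_irrefl 0 this
  have hbdd : ∀ y > (0:ℝ), BddAbove ((fun l => l*y - g l) '' Λ) := by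
    intro y hy
    by_contra hb
    have key : ∀ z, y ≤ z → ¬ BddAbove ((fun l => l*z - g l) '' Λ) := by
      intro z hz hbz
      apply hb
      obtain ⟨M, hM⟩ := hbz
      refine ⟨M, ?_⟩
      rintro _ ⟨l, hl, rfl⟩
      have hlpos : (0:ℝ) < l := hΛpos hl
      have h1 : l*y - g l ≤ l*z - g l := by nlinarith
      exact h1.trans (hM ⟨l, hl, rfl⟩)
    have h1 : gstar y = 0 := Real.sSup_of_not_bddAbove (key y le_rfl)
    have h2 : gstar (y+1) = 0 := Real.sSup_of_not_bddAbove (key (y+1) (by linarith))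
    have := hmono (Set.mem_Ioi.mpr hy) (Set.mem_Ioi.mpr (show (0:ℝ) < y+1 by linarith))
      (show y < y+1 by linarith)
    rw [h1, h2] at this; exact lt_irrefl 0 this
  have hCg : Cg (gstar x) = x := by
    have hSne : ((fun l => (g l + gstar x)/l) '' Λ).Nonempty := hΛne.image _
    have hlow : ∀ v ∈ (fun l => (g l + gstar x)/l) '' Λ, x ≤ v := by
      rintro _ ⟨l, hl, rfl⟩
      have hlpos : (0:ℝ) < l := hΛpos hl
      have hle : l*x - g l ≤ gstar x := le_csSup (hbdd x hx') ⟨l, hl, rfl⟩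
      rw [le_div_iff₀ hlpos]; linarith
    have h1 : x ≤ Cg (gstar x) := le_csInf hSne hlow
    have h2 : Cg (gstar x) ≤ x := by
      by_contra h
      push_neg at h
      set y := (x + Cg (gstar x))/2 with hy
      have hy1 : x < y := by rw [hy]; linarith
      have hy2 : y < Cg (gstar x) := by rw [hy]; linarith
      have hlt : gstar x < gstar y := hmono hx (Set.mem_Ioi.mpr (lt_trans hx' hy1)) hy1
      obtain ⟨_, ⟨l, hl, rfl⟩, hvl⟩ := exists_lt_of_lt_csSup (hΛne.image _) hlt
      have hlpos : (0:ℝ) < l := hΛpos hl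
      have hvl' : gstar x < l * y - g l := hvl
      have h3 : (g l + gstar x)/l < y := by rw [div_lt_iff₀ hlpos]; nlinarith [hvl']
      have h4 : Cg (gstar x) ≤ (g l + gstar x)/l :=
        csInf_le ⟨x, fun v hv => hlow v hv⟩ ⟨l, hl, rfl⟩
      linarith
    linarith
  rw [hCg]
  exact ((hmono.injOn).leftInvOn_invFunOn hx).symm
end

section
/- Let λ ∈ (0,1), α > 0, μ > 0, t ≥ 1. Define p_t(η) = (μ/α)·((αt/e)^{λαt}/Γ(λαt))·(1 - ημ/α)^{-αt}·(λ - ημ/α)^{λαt - 1} for η < λα/μ. Then for every x > 0, ∫_{-∞}^{λα/μ} p_t(η)·exp(ηtx - αt·ln(α/(α-μη))) dη = exp(λt·d(x,μ)), where d(x,μ) = α(x/μ - 1 - ln(x/μ)). -/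
open MeasureTheory

/-- Gamma prior identity: for `λ ∈ (0,1)`, `α, μ > 0`, `t ≥ 1` and `x > 0`, with
`p_t(η) = (μ/α) ((αt/e)^{λαt}/Γ(λαt)) (1-ημ/α)^{-αt} (λ-ημ/α)^{λαt-1}` for `η < λα/μ`,
`∫_{-∞}^{λα/μ} p_t(η) exp(η t x - α t ln(α/(α-μη))) dη = exp(λ t d(x,μ))` where
`d(x,μ) = α (x/μ - 1 - ln(x/μ))`. -/
theorem stmt8 (l α μ t x : ℝ) (hl : l ∈ Set.Ioo (0:ℝ) 1) (hα : 0 < α) (hμ : 0 < μ)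
    (ht : 1 ≤ t) (hx : 0 < x) :
    (∫ η in Set.Iio (l*α/μ),
        (μ/α) * ((α*t/Real.exp 1) ^ (l*α*t) / Real.Gamma (l*α*t))
          * (1 - η*μ/α) ^ (-(α*t)) * (l - η*μ/α) ^ (l*α*t - 1)
          * Real.exp (η*t*x - α*t*Real.log (α/(α - μ*η))))
      = Real.exp (l*t*(α*(x/μ - 1 - Real.log (x/μ)))) := by
  obtain ⟨hl0, hl1⟩ := hl
  have ht0 : 0 < t := lt_of_lt_of_le one_pos ht
  set s : ℝ := l*α/μ with hs
  set a : ℝ := l*α*t with ha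
  set b : ℝ := t*x with hb
  have ha0 : 0 < a := by positivity
  have hb0 : 0 < b := by positivity
  have hΓ : 0 < Real.Gamma a := Real.Gamma_pos_of_pos ha0
  set K : ℝ := ((α*t/Real.exp 1) ^ a / Real.Gamma a) * (μ/α) ^ a * Real.exp (b*s) with hK
  have step1 : (∫ η in Set.Iio s,
        (μ/α) * ((α*t/Real.exp 1) ^ a / Real.Gamma a)
          * (1 - η*μ/α) ^ (-(α*t)) * (l - η*μ/α) ^ (a - 1)
          * Real.exp (η*t*x - α*t*Real.log (α/(α - μ*η))))
      = ∫ η in Set.Iio s, K * ((s - η) ^ (a-1) * Real.exp (-(b*(s-η)))) := by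
    refine setIntegral_congr_fun measurableSet_Iio (fun η hη => ?_)
    have hη' : η < s := hη
    have hsη : 0 < s - η := sub_pos.mpr hη'
    have hαμη : 0 < α - μ*η := by
      have : μ*η < μ*s := by nlinarith
      have hμs : μ*s = l*α := by rw [hs]; field_simp
      nlinarith
    have h1 : (0:ℝ) < 1 - η*μ/α := by
      have : 1 - η*μ/α = (α - μ*η)/α := by field_simp
      rw [this]; positivity
    have hlη : l - η*μ/α = (μ/α) * (s - η) := by
      field_simp [hs]; rw [mul_sub, show μ*s = l*α by rw [hs]; field_simp]; ring
    have hlog : Real.log (α/(α - μ*η)) = - Real.log (1 - η*μ/α) := by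
      have : (1:ℝ) - η*μ/α = ((α/(α - μ*η)))⁻¹ := by field_simp
      rw [this, Real.log_inv, neg_neg]
    have hexp : Real.exp (η*t*x - α*t*Real.log (α/(α - μ*η)))
        = Real.exp (b*s) * Real.exp (-(b*(s-η))) * (1 - η*μ/α) ^ (α*t) := by
      rw [hlog, Real.rpow_def_of_pos h1, ← Real.exp_add, ← Real.exp_add]
      congr 1
      rw [hb, hs]
      field_simp
      ring
    rw [hexp, hlη, Real.mul_rpow (by positivity) hsη.le, hK]
    have hcancel : (1 - η*μ/α) ^ (-(α*t)) * (1 - η*μ/α) ^ (α*t) = 1 := by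
      rw [← Real.rpow_add h1]
      simp
    have hpow : (μ/α) * (μ/α)^(a-1) = (μ/α)^a := by
      nth_rewrite 1 [← Real.rpow_one (μ/α)]
      rw [← Real.rpow_add (by positivity)]
      norm_num
    calc (μ/α) * ((α*t/Real.exp 1) ^ a / Real.Gamma a)
          * (1 - η*μ/α) ^ (-(α*t)) * ((μ/α)^(a-1) * (s-η)^(a-1))
          * (Real.exp (b*s) * Real.exp (-(b*(s-η))) * (1 - η*μ/α) ^ (α*t))
        = ((α*t/Real.exp 1) ^ a / Real.Gamma a) * ((μ/α) * (μ/α)^(a-1)) * Real.exp (b*s)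
            * ((s-η)^(a-1) * Real.exp (-(b*(s-η))))
            * ((1 - η*μ/α) ^ (-(α*t)) * (1 - η*μ/α) ^ (α*t)) := by ring
      _ = _ := by rw [hcancel, hpow, mul_one]
  rw [step1, integral_const_mul]
  have emb : MeasurableEmbedding (fun η : ℝ => s - η) := by
    have hfun : (fun η : ℝ => s - η) = (fun u : ℝ => s + u) ∘ (fun η : ℝ => -η) := by
      funext η; simp [sub_eq_add_neg]
    rw [hfun]
    exact (MeasurableEquiv.addLeft s).measurableEmbedding.comp
      (MeasurableEquiv.neg ℝ).measurableEmbedding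
  have hmp : MeasurePreserving (fun η : ℝ => s - η) volume volume :=
    Measure.measurePreserving_sub_left volume s
  have step2 : (∫ η in Set.Iio s, (s - η) ^ (a-1) * Real.exp (-(b*(s-η))))
      = ∫ u in Set.Ioi (0:ℝ), u ^ (a-1) * Real.exp (-(b*u)) := by
    have := hmp.setIntegral_preimage_emb emb
      (fun u => u ^ (a-1) * Real.exp (-(b*u))) (Set.Ioi 0)
    rw [← this]
    congr 1
    rw [Set.preimage_const_sub_Ioi, sub_zero]
  rw [step2, Real.integral_rpow_mul_exp_neg_mul_Ioi ha0 hb0]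
  -- final arithmetic
  have hbs : t * x * s = a * (x/μ) := by rw [hs, ha]; field_simp
  have key : ∀ y : ℝ, 0 < y → (y : ℝ) ^ a = Real.exp (Real.log y * a) :=
    fun y hy => Real.rpow_def_of_pos hy a
  rw [hK, key _ (by positivity : (0:ℝ) < α*t/Real.exp 1), key _ (by positivity : (0:ℝ) < μ/α),
    key _ (by positivity : (0:ℝ) < 1/b)]
  rw [Real.log_div (by positivity) (Real.exp_ne_zero 1), Real.log_exp,
    Real.log_mul hα.ne' ht0.ne', Real.log_div hμ.ne' hα.ne', Real.log_div one_ne_zero hb0.ne',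
    Real.log_one, hb, Real.log_mul ht0.ne' hx.ne', Real.log_div hx.ne' hμ.ne']
  rw [div_eq_mul_inv]
  have hre : ∀ A B C D : ℝ, A * (Real.Gamma a)⁻¹ * B * C * (D * Real.Gamma a)
      = (A*B*C*D) * ((Real.Gamma a)⁻¹ * Real.Gamma a) := by intros; ring
  rw [hre, inv_mul_cancel₀ hΓ.ne', mul_one,
    ← Real.exp_add, ← Real.exp_add, ← Real.exp_add, hbs]
  congr 1
  rw [ha]
  ring
end

section
/- For λ ∈ (0,1) and α, t > 0, define C₀(t,λ) = (Γ((1-λ)αt)/Γ(αt))·(αt/e)^{λαt}·(1-λ)^{-(1-λ)αt}. Then C₀(t,λ) is decreasing in t on (0,∞). -/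
/-!
With `f x = log Γ(x) - x log x + x`, the function of `t` is `exp (f (b t) - f (a t))` for
`b = (1 - λ) α < a = α`, and the derivative of `f (b t) - f (a t)` is `(g (b t) - g (a t)) / t`
with `g x = x f' x = x (ψ x - log x)`; so it suffices that `g` is strictly increasing.
Gauss' formula `ψ x - log x = -∫₀^∞ e^{-x s} B(s) ds`, `B(s) = 1/(1 - e^{-s}) - 1/s`, gives
`g x = -∫₀^∞ e^{-w} B(w/x) dw` after the substitution `s = w / x`, and `B` is strictly
increasing. Gauss' formula itself follows because both sides increase by `1/x` from `x` to
`x + 1` (for the integral this is Frullani's integral) and both tend to `0` as `x → ∞` (for `ψ`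
by log-convexity of `Γ`), so their difference is `1`-periodic and tends to `0`.
-/

open Real Set Filter Topology MeasureTheory

theorem setIntegral_lt_setIntegral_of_forall_lt {α : Type*} [MeasurableSpace α] {μ : Measure α}
    {s : Set α} {f g : α → ℝ} (hs : MeasurableSet s) (hμs : μ s ≠ 0)
    (hf : IntegrableOn f s μ) (hg : IntegrableOn g s μ) (hlt : ∀ x ∈ s, f x < g x) :
    ∫ x in s, f x ∂μ < ∫ x in s, g x ∂μ := by
  rw [← sub_pos, ← integral_sub hg hf, setIntegral_pos_iff_support_of_nonneg_ae
    ((ae_restrict_iff' hs).2 (Eventually.of_forall fun x hx => (sub_pos.2 (hlt x hx)).le))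
    (hg.sub hf), inter_eq_right.2 fun x hx => Function.mem_support.2 (sub_pos.2 (hlt x hx)).ne']
  exact pos_iff_ne_zero.2 hμs

theorem strictAntiOn_comp_mul_sub_comp_mul {f f' : ℝ → ℝ} {a b : ℝ}
    (hf : ∀ x ∈ Ioi (0 : ℝ), HasDerivAt f (f' x) x)
    (hmono : StrictMonoOn (fun x => x * f' x) (Ioi 0)) (hb : 0 < b) (hba : b < a) :
    StrictAntiOn (fun t => f (b * t) - f (a * t)) (Ioi 0) := by
  have ha : 0 < a := hb.trans hba
  have hderiv : ∀ t ∈ Ioi (0 : ℝ),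
      HasDerivAt (fun t => f (b * t) - f (a * t)) (f' (b * t) * b - f' (a * t) * a) t :=
    fun t ht => ((hf _ (mul_pos hb ht)).comp t ((hasDerivAt_id t).const_mul b)).sub
      ((hf _ (mul_pos ha ht)).comp t ((hasDerivAt_id t).const_mul a)) |>.congr_deriv (by simp)
  refine strictAntiOn_of_deriv_neg (convex_Ioi 0)
    (fun t ht => (hderiv t ht).continuousAt.continuousWithinAt) fun t ht => ?_
  rw [interior_Ioi] at ht
  have hlt := hmono (mul_pos hb ht) (mul_pos ha ht) (mul_lt_mul_of_pos_right hba ht)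
  rw [(hderiv t ht).deriv]
  have : (b * t) * f' (b * t) - (a * t) * f' (a * t) =
      t * (f' (b * t) * b - f' (a * t) * a) := by ring
  exact neg_of_mul_neg_right (by rw [← this]; exact sub_neg.2 hlt) ht.le

namespace Real

noncomputable def digamma (x : ℝ) : ℝ := deriv (fun y => log (Gamma y)) x

theorem hasDerivAt_log_Gamma {x : ℝ} (hx : 0 < x) :
    HasDerivAt (fun y => log (Gamma y)) (digamma x) x :=
  ((differentiableAt_Gamma fun m => ((neg_nonpos.2 m.cast_nonneg).trans_lt hx).ne').log
    (Gamma_pos_of_pos hx).ne').hasDerivAt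

theorem digamma_add_one {x : ℝ} (hx : 0 < x) : digamma (x + 1) = digamma x + x⁻¹ := by
  have hshift : HasDerivAt (fun y => log (Gamma (y + 1))) (digamma (x + 1)) x := by
    simpa using (hasDerivAt_log_Gamma (by linarith : 0 < x + 1)).comp_add_const x 1
  have hsplit : HasDerivAt (fun y => log y + log (Gamma y)) (x⁻¹ + digamma x) x :=
    (hasDerivAt_log hx.ne').add (hasDerivAt_log_Gamma hx)
  have heq : (fun y => log (Gamma (y + 1))) =ᶠ[𝓝 x] fun y => log y + log (Gamma y) := by
    filter_upwards [lt_mem_nhds hx] with y hy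
    rw [Gamma_add_one hy.ne', log_mul hy.ne' (Gamma_pos_of_pos hy).ne']
  rw [(hshift.congr_of_eventuallyEq heq.symm).unique hsplit, add_comm]

theorem log_Gamma_add_one_sub {x : ℝ} (hx : 0 < x) :
    log (Gamma (x + 1)) - log (Gamma x) = log x := by
  rw [Gamma_add_one hx.ne', log_mul hx.ne' (Gamma_pos_of_pos hx).ne', add_sub_cancel_right]

theorem digamma_le_log {x : ℝ} (hx : 0 < x) : digamma x ≤ log x := by
  have := convexOn_log_Gamma.le_slope_of_hasDerivAt hx (mem_Ioi.2 (by linarith) : x + 1 ∈ Ioi 0)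
    (lt_add_one x) (hasDerivAt_log_Gamma hx)
  simpa [slope_def_field, log_Gamma_add_one_sub hx] using this

theorem log_le_digamma_add_one {x : ℝ} (hx : 0 < x) : log x ≤ digamma (x + 1) := by
  have := convexOn_log_Gamma.slope_le_of_hasDerivAt hx (mem_Ioi.2 (by linarith) : x + 1 ∈ Ioi 0)
    (lt_add_one x) (hasDerivAt_log_Gamma (by linarith : 0 < x + 1))
  simpa [slope_def_field, log_Gamma_add_one_sub hx] using this

theorem tendsto_digamma_sub_log_atTop :
    Tendsto (fun x => digamma x - log x) atTop (𝓝 0) := by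
  have hlow : Tendsto (fun x : ℝ => log (x - 1) - log x) atTop (𝓝 0) := by
    have h : Tendsto (fun x : ℝ => log (1 - x⁻¹)) atTop (𝓝 0) := by
      have h1 : Tendsto (fun x : ℝ => 1 - x⁻¹) atTop (𝓝 1) := by
        simpa using tendsto_inv_atTop_zero.const_sub (1 : ℝ)
      simpa [Function.comp_def] using (continuousAt_log one_ne_zero).tendsto.comp h1
    refine h.congr' ?_
    filter_upwards [eventually_gt_atTop 1] with x hx
    rw [← log_div (by linarith) (by linarith), sub_div, div_self (by linarith), one_div]
  refine tendsto_of_tendsto_of_tendsto_of_le_of_le' hlow tendsto_const_nhds ?_ ?_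
  · filter_upwards [eventually_gt_atTop 1] with x hx
    have := log_le_digamma_add_one (by linarith : 0 < x - 1)
    rw [sub_add_cancel] at this
    linarith
  · filter_upwards [eventually_gt_atTop 0] with x hx
    linarith [digamma_le_log hx]

noncomputable def digammaKernel (s : ℝ) : ℝ := (1 - exp (-s))⁻¹ - s⁻¹

theorem one_sub_exp_neg_pos {s : ℝ} (hs : 0 < s) : 0 < 1 - exp (-s) := by
  simpa using hs

theorem digammaKernel_nonneg {s : ℝ} (hs : 0 < s) : 0 ≤ digammaKernel s :=
  sub_nonneg.2 <| inv_anti₀ (one_sub_exp_neg_pos hs) (by linarith [one_sub_le_exp_neg s])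

theorem digammaKernel_le_one {s : ℝ} (hs : 0 < s) : digammaKernel s ≤ 1 := by
  have h := one_sub_exp_neg_pos hs
  have hexp : exp (-s) * (s + 1) ≤ 1 :=
    calc exp (-s) * (s + 1) ≤ exp (-s) * exp s := by gcongr; exact add_one_le_exp s
      _ = 1 := by rw [← exp_add, neg_add_cancel, exp_zero]
  have hid : (1 + s⁻¹) * (1 - exp (-s)) = 1 + s⁻¹ * (1 - exp (-s) * (s + 1)) := by
    field_simp; ring
  rw [digammaKernel, sub_le_iff_le_add, inv_le_iff_one_le_mul₀ h, hid]
  have : 0 ≤ s⁻¹ * (1 - exp (-s) * (s + 1)) := mul_nonneg (inv_nonneg.2 hs.le) (by linarith)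
  linarith

theorem one_sub_exp_neg_mul_digammaKernel {s : ℝ} (hs : 0 < s) :
    (1 - exp (-s)) * digammaKernel s = 1 - (1 - exp (-s)) / s := by
  rw [digammaKernel, mul_sub, mul_inv_cancel₀ (one_sub_exp_neg_pos hs).ne', div_eq_mul_inv]

theorem hasDerivAt_digammaKernel {s : ℝ} (hs : 0 < s) :
    HasDerivAt digammaKernel ((s ^ 2)⁻¹ - exp (-s) / (1 - exp (-s)) ^ 2) s := by
  have h := ((hasDerivAt_neg s).exp.const_sub 1).inv (one_sub_exp_neg_pos hs).ne'
  exact (h.sub (hasDerivAt_inv hs.ne')).congr_deriv (by ring)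

theorem exp_neg_mul_sq_lt_one_sub_exp_neg_sq {s : ℝ} (hs : 0 < s) :
    exp (-s) * s ^ 2 < (1 - exp (-s)) ^ 2 := by
  have hsinh : s / 2 < sinh (s / 2) := self_lt_sinh_iff.2 (by positivity)
  have hfactor : 1 - exp (-s) = exp (-(s / 2)) * (exp (s / 2) - exp (-(s / 2))) := by
    rw [mul_sub, ← exp_add, ← exp_add, neg_add_cancel, exp_zero,
      show -(s / 2) + -(s / 2) = -s by ring]
  have key : exp (-(s / 2)) * s < 1 - exp (-s) := by
    rw [hfactor]
    gcongr
    linarith [sinh_eq (s / 2)]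
  calc exp (-s) * s ^ 2 = (exp (-(s / 2)) * s) ^ 2 := by
        rw [mul_pow, ← exp_nat_mul]; ring_nf
    _ < (1 - exp (-s)) ^ 2 := pow_lt_pow_left₀ key (by positivity) two_ne_zero

theorem continuousOn_digammaKernel : ContinuousOn digammaKernel (Ioi 0) :=
  fun _ hs => (hasDerivAt_digammaKernel hs).continuousAt.continuousWithinAt

theorem strictMonoOn_digammaKernel : StrictMonoOn digammaKernel (Ioi 0) := by
  refine strictMonoOn_of_deriv_pos (convex_Ioi 0) continuousOn_digammaKernel fun s hs => ?_
  rw [interior_Ioi] at hs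
  have h := one_sub_exp_neg_pos hs
  rw [(hasDerivAt_digammaKernel hs).deriv, sub_pos, div_lt_iff₀ (pow_pos h 2), inv_mul_eq_div,
    lt_div_iff₀ (pow_pos hs 2)]
  exact exp_neg_mul_sq_lt_one_sub_exp_neg_sq hs

noncomputable def digammaRemainder (x : ℝ) : ℝ := ∫ s in Ioi 0, exp (-x * s) * digammaKernel s

theorem integrableOn_exp_neg_mul_digammaKernel {x : ℝ} (hx : 0 < x) :
    IntegrableOn (fun s => exp (-x * s) * digammaKernel s) (Ioi 0) := by
  refine (exp_neg_integrableOn_Ioi 0 hx).mono' ?_ ?_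
  · exact ((continuous_exp.comp (continuous_const.mul continuous_id)).continuousOn.mul
      continuousOn_digammaKernel).aestronglyMeasurable measurableSet_Ioi
  · filter_upwards [ae_restrict_mem measurableSet_Ioi] with s hs
    rw [norm_mul, norm_of_nonneg (exp_pos _).le, norm_of_nonneg (digammaKernel_nonneg hs)]
    exact mul_le_of_le_one_right (exp_pos _).le (digammaKernel_le_one hs)

theorem digammaRemainder_nonneg (x : ℝ) : 0 ≤ digammaRemainder x :=
  setIntegral_nonneg measurableSet_Ioi fun _ hs =>
    mul_nonneg (exp_pos _).le (digammaKernel_nonneg hs)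

theorem integral_exp_neg_mul_Ioi {x : ℝ} (hx : 0 < x) :
    ∫ s in Ioi 0, exp (-x * s) = x⁻¹ := by
  rw [integral_exp_mul_Ioi (neg_neg_of_pos hx) 0, mul_zero, exp_zero, neg_div_neg_eq, one_div]

theorem digammaRemainder_le_inv {x : ℝ} (hx : 0 < x) : digammaRemainder x ≤ x⁻¹ :=
  (setIntegral_mono_on (integrableOn_exp_neg_mul_digammaKernel hx)
    (exp_neg_integrableOn_Ioi 0 hx) measurableSet_Ioi fun _ hs =>
      mul_le_of_le_one_right (exp_pos _).le (digammaKernel_le_one hs)).trans_eq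
    (integral_exp_neg_mul_Ioi hx)

theorem tendsto_digammaRemainder_atTop : Tendsto digammaRemainder atTop (𝓝 0) :=
  tendsto_of_tendsto_of_tendsto_of_le_of_le' tendsto_const_nhds tendsto_inv_atTop_zero
    (Eventually.of_forall digammaRemainder_nonneg)
    (by filter_upwards [eventually_gt_atTop 0] with x hx using digammaRemainder_le_inv hx)

theorem digammaRemainder_sub_add_one {x : ℝ} (hx : 0 < x) :
    digammaRemainder x - digammaRemainder (x + 1) = x⁻¹ - log ((x + 1) / x) := by
  have hx1 : 0 < x + 1 := by linarith
  have hdiff : IntegrableOn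
      (fun s => exp (-x * s) * digammaKernel s - exp (-(x + 1) * s) * digammaKernel s) (Ioi 0) :=
    (integrableOn_exp_neg_mul_digammaKernel hx).sub (integrableOn_exp_neg_mul_digammaKernel hx1)
  have hsplit : ∀ s ∈ Ioi (0 : ℝ), s⁻¹ • (exp (-(x * s)) - exp (-((x + 1) * s))) =
      exp (-x * s) - (exp (-x * s) * digammaKernel s - exp (-(x + 1) * s) * digammaKernel s) := by
    intro s hs
    have h1 : exp (-((x + 1) * s)) = exp (-(x * s)) * exp (-s) := by rw [← exp_add]; ring_nf
    simp only [smul_eq_mul, neg_mul, h1]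
    linear_combination (exp (-(x * s))) * (one_sub_exp_neg_mul_digammaKernel hs)
  have hcont : Continuous fun u : ℝ => exp (-u) := by fun_prop
  have hfrullani : ∫ s in Ioi 0, s⁻¹ • (exp (-(x * s)) - exp (-((x + 1) * s))) =
      log ((x + 1) / x) := by
    simpa using Frullani.integral_Ioi_eq (f := fun u => exp (-u)) (L := 1) (R := 0)
      (hcont.locallyIntegrable.locallyIntegrableOn _) hx hx1
      ((hcont.tendsto' 0 1 (by simp)).mono_left nhdsWithin_le_nhds)
      tendsto_exp_neg_atTop_nhds_zero
      (((exp_neg_integrableOn_Ioi 0 hx).sub hdiff).congr_fun (fun s hs => (hsplit s hs).symm)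
        measurableSet_Ioi)
  rw [setIntegral_congr_fun measurableSet_Ioi hsplit,
    integral_sub (exp_neg_integrableOn_Ioi 0 hx) hdiff, integral_exp_neg_mul_Ioi hx,
    integral_sub (integrableOn_exp_neg_mul_digammaKernel hx)
      (integrableOn_exp_neg_mul_digammaKernel hx1)] at hfrullani
  rw [digammaRemainder, digammaRemainder]
  linarith

theorem digamma_eq_log_sub_digammaRemainder {x : ℝ} (hx : 0 < x) :
    digamma x = log x - digammaRemainder x := by
  set E : ℝ → ℝ := fun y => digamma y - log y + digammaRemainder y
  have hperiodic : ∀ y > 0, E (y + 1) = E y := fun y hy => by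
    have h := digammaRemainder_sub_add_one hy
    rw [log_div (by linarith) hy.ne'] at h
    simp only [E, digamma_add_one hy]
    linarith
  have hshift : ∀ n : ℕ, E (x + n) = E x := fun n => by
    induction n with
    | zero => simp
    | succ n ih => rw [Nat.cast_succ, ← add_assoc, hperiodic _ (by positivity), ih]
  have hlim : Tendsto (fun n : ℕ => E (x + n)) atTop (𝓝 0) := by
    simpa [E, Function.comp_def] using
      (tendsto_digamma_sub_log_atTop.add tendsto_digammaRemainder_atTop).comp
      (tendsto_atTop_add_const_left atTop x tendsto_natCast_atTop_atTop)
  have h0 : E x = 0 := tendsto_nhds_unique tendsto_const_nhds (hlim.congr hshift)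
  simp only [E] at h0
  linarith

theorem integrableOn_exp_neg_mul_digammaKernel_div {x : ℝ} (hx : 0 < x) :
    IntegrableOn (fun w => exp (-w) * digammaKernel (w / x)) (Ioi 0) := by
  simpa using (integrableOn_Ioi_comp_mul_left_iff (fun w => exp (-w) * digammaKernel (w / x)) 0
    hx).1 (by simpa [hx.ne'] using integrableOn_exp_neg_mul_digammaKernel hx)

theorem mul_digammaRemainder_eq_integral {x : ℝ} (hx : 0 < x) :
    x * digammaRemainder x = ∫ w in Ioi 0, exp (-w) * digammaKernel (w / x) := by
  have h := integral_comp_mul_left_Ioi (fun w => exp (-w) * digammaKernel (w / x)) 0 hx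
  simp only [mul_div_cancel_left₀ _ hx.ne', mul_zero, smul_eq_mul, ← neg_mul] at h
  rw [digammaRemainder, h, mul_inv_cancel_left₀ hx.ne']

theorem strictAntiOn_mul_digammaRemainder :
    StrictAntiOn (fun x => x * digammaRemainder x) (Ioi 0) := by
  intro p hp q hq hpq
  simp only [mul_digammaRemainder_eq_integral hp, mul_digammaRemainder_eq_integral hq]
  refine setIntegral_lt_setIntegral_of_forall_lt measurableSet_Ioi (by simp)
    (integrableOn_exp_neg_mul_digammaKernel_div hq) (integrableOn_exp_neg_mul_digammaKernel_div hp)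
    fun w hw => ?_
  have hwq : 0 < w / q := div_pos hw hq
  exact mul_lt_mul_of_pos_left (strictMonoOn_digammaKernel hwq (hwq.trans
    (div_lt_div_of_pos_left hw hp hpq)) (div_lt_div_of_pos_left hw hp hpq)) (exp_pos _)

noncomputable def stirlingRemainder (x : ℝ) : ℝ := log (Gamma x) - x * log x + x

theorem hasDerivAt_stirlingRemainder {x : ℝ} (hx : 0 < x) :
    HasDerivAt stirlingRemainder (-digammaRemainder x) x := by
  have h := ((hasDerivAt_log_Gamma hx).sub ((hasDerivAt_id x).mul (hasDerivAt_log hx.ne'))).add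
    (hasDerivAt_id x)
  refine h.congr_deriv ?_
  rw [digamma_eq_log_sub_digammaRemainder hx, id_eq, one_mul, mul_inv_cancel₀ hx.ne']
  ring

theorem strictMonoOn_mul_neg_digammaRemainder :
    StrictMonoOn (fun x => x * -digammaRemainder x) (Ioi 0) := fun p hp q hq hpq => by
  simpa using strictAntiOn_mul_digammaRemainder hp hq hpq

theorem Gamma_ratio_eq_exp_stirlingRemainder_sub {l x : ℝ} (hl : l < 1) (hx : 0 < x) :
    Gamma ((1 - l) * x) / Gamma x * (x / exp 1) ^ (l * x) * (1 - l) ^ (-((1 - l) * x)) =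
      exp (stirlingRemainder ((1 - l) * x) - stirlingRemainder x) := by
  have hl' : 0 < 1 - l := by linarith
  rw [← exp_log (Gamma_pos_of_pos (mul_pos hl' hx)), ← exp_log (Gamma_pos_of_pos hx),
    rpow_def_of_pos (div_pos hx (exp_pos 1)), rpow_def_of_pos hl', ← exp_sub, ← exp_add,
    ← exp_add, log_div hx.ne' (exp_pos 1).ne', log_exp, stirlingRemainder, stirlingRemainder,
    log_mul hl'.ne' hx.ne']
  ring_nf

end Real

/-- For `λ ∈ (0,1)` and `α > 0`, the function
`C₀(t,λ) = (Γ((1-λ)αt)/Γ(αt)) (αt/e)^{λαt} (1-λ)^{-(1-λ)αt}` is (strictly) decreasing in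
`t` on `(0,∞)`. -/
theorem stmt11 (l α : ℝ) (hl : l ∈ Set.Ioo (0:ℝ) 1) (hα : 0 < α) :
    StrictAntiOn (fun t => Real.Gamma ((1-l)*α*t)/Real.Gamma (α*t)
        * (α*t/Real.exp 1) ^ (l*α*t) * (1-l) ^ (-((1-l)*α*t)))
      (Set.Ioi 0) := by
  obtain ⟨hl0, hl1⟩ := hl
  have hanti := strictAntiOn_comp_mul_sub_comp_mul (fun x hx => hasDerivAt_stirlingRemainder hx)
    strictMonoOn_mul_neg_digammaRemainder (mul_pos (by linarith) hα)
    (mul_lt_of_lt_one_left hα (by linarith) : (1 - l) * α < α)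
  refine (exp_strictMono.comp_strictAntiOn hanti).congr fun t ht => ?_
  simpa only [Function.comp_apply, mul_assoc] using
    (Gamma_ratio_eq_exp_stirlingRemainder_sub hl1 (mul_pos hα ht)).symm
end

section
/- For λ ∈ (0,1) and α > 0, the function C₀(t,λ) = (Γ((1-λ)αt)/Γ(αt))·(αt/e)^{λαt}·(1-λ)^{-(1-λ)αt} satisfies lim_{t→0⁺} C₀(t,λ) = 1/(1-λ) and lim_{t→∞} C₀(t,λ) = 1/√(1-λ). Consequently, 1/√(1-λ) ≤ C₀(t,λ) ≤ 1/(1-λ) for all t > 0. -/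
/-!
Binet's function `μ x = ∑ₙ g (x + n)`, with `g y = (y + 1/2) (log (y + 1) - log y) - 1`,
converges because `0 ≤ g y ≤ 1/(4y) - 1/(4(y+1))`. The function
`F x = (x - 1/2) log x - x + μ x` is convex and satisfies `F (x + 1) = F x + log x`, so by
Bohr–Mollerup `Γ = exp (F - F 1)` on `(0, ∞)`. With `s = αt` and `c = 1 - λ` this gives
`C₀ = c^(-1/2) exp (μ (c s) - μ s)`, in which the Stirling constant has cancelled.
Since `g` is decreasing, so is `μ`, which gives the lower bound; since
`g y - (log (y + 1) - log y)/2 = y (log (y + 1) - log y) - 1` is increasing, so is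
`μ x + (log x)/2`, which gives `μ (c s) - μ s ≤ -(log c)/2` and the upper bound.
The limit at `∞` follows from `μ x ≤ 1/(4x)`; at `0⁺` one writes `Γ x = Γ (x + 1) / x`.
-/

open Real Set Filter Topology

section LogDifference

variable {y : ℝ}

lemma log_add_one_sub_log (hy : 0 < y) : log (y + 1) - log y = log (1 + y⁻¹) := by
  rw [← log_div (by positivity) hy.ne', add_div, div_self hy.ne', one_div]

lemma inv_add_one_le_log_add_one_sub_log (hy : 0 < y) : (y + 1)⁻¹ ≤ log (y + 1) - log y := by
  have h := one_sub_inv_le_log_of_pos (show 0 < 1 + y⁻¹ by positivity)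
  rw [log_add_one_sub_log hy]
  convert h using 1
  field_simp
  ring

lemma two_div_two_mul_add_one_le_log_add_one_sub_log (hy : 0 < y) :
    2 / (2 * y + 1) ≤ log (y + 1) - log y := by
  have h := le_log_one_add_of_nonneg (inv_nonneg.mpr hy.le)
  rw [log_add_one_sub_log hy]
  convert h using 1
  field_simp
  ring

-- `log x ≤ sinh (log x) = (x - x⁻¹) / 2` at `x = 1 + y⁻¹`.
lemma log_add_one_sub_log_le (hy : 0 < y) :
    log (y + 1) - log y ≤ (y⁻¹ + (y + 1)⁻¹) / 2 := by
  have hx : 0 < 1 + y⁻¹ := by positivity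
  have h := self_le_sinh_iff.mpr (log_nonneg (le_add_of_nonneg_right (inv_nonneg.mpr hy.le)))
  rw [sinh_log hx] at h
  rw [log_add_one_sub_log hy]
  convert h using 1
  field_simp
  ring

lemma hasDerivAt_log_add_one_sub_log (hy : 0 < y) :
    HasDerivAt (fun y => log (y + 1) - log y) ((y + 1)⁻¹ - y⁻¹) y :=
  ((hasDerivAt_log (by positivity)).comp_add_const y 1).sub (hasDerivAt_log hy.ne')

end LogDifference

noncomputable def binetTerm (y : ℝ) : ℝ := (y + 1 / 2) * (log (y + 1) - log y) - 1

section BinetTerm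

variable {y : ℝ}

lemma binetTerm_nonneg (hy : 0 < y) : 0 ≤ binetTerm y := by
  have h := mul_le_mul_of_nonneg_left (two_div_two_mul_add_one_le_log_add_one_sub_log hy)
    (show 0 ≤ y + 1 / 2 by positivity)
  have h1 : (y + 1 / 2) * (2 / (2 * y + 1)) = 1 := by field_simp
  rw [binetTerm]
  linarith

lemma binetTerm_le (hy : 0 < y) : binetTerm y ≤ (4 * y)⁻¹ - (4 * (y + 1))⁻¹ := by
  have h := mul_le_mul_of_nonneg_left (log_add_one_sub_log_le hy)
    (show 0 ≤ y + 1 / 2 by positivity)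
  have h1 : (y + 1 / 2) * ((y⁻¹ + (y + 1)⁻¹) / 2) - 1 = (4 * y)⁻¹ - (4 * (y + 1))⁻¹ := by
    field_simp
    ring
  rw [binetTerm]
  linarith

lemma hasDerivAt_binetTerm (hy : 0 < y) :
    HasDerivAt binetTerm (log (y + 1) - log y - (y⁻¹ + (y + 1)⁻¹) / 2) y := by
  refine ((((hasDerivAt_id' y).add_const (1 / 2)).fun_mul
    (hasDerivAt_log_add_one_sub_log hy)).sub_const 1).congr_deriv ?_
  field_simp
  ring

lemma hasDerivAt_deriv_binetTerm (hy : 0 < y) :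
    HasDerivAt (fun y => log (y + 1) - log y - (y⁻¹ + (y + 1)⁻¹) / 2)
      ((y⁻¹ - (y + 1)⁻¹) ^ 2 / 2) y := by
  have hinv := hasDerivAt_inv hy.ne'
  have hinv1 := (hasDerivAt_inv (show y + 1 ≠ 0 by positivity)).comp_add_const y 1
  refine ((hasDerivAt_log_add_one_sub_log hy).fun_sub
    ((hinv.fun_add hinv1).div_const 2)).congr_deriv ?_
  field_simp
  ring

lemma antitoneOn_binetTerm : AntitoneOn binetTerm (Ioi 0) := by
  refine antitoneOn_of_hasDerivWithinAt_nonpos (convex_Ioi 0)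
    (f' := fun y => log (y + 1) - log y - (y⁻¹ + (y + 1)⁻¹) / 2)
    (fun y hy => (hasDerivAt_binetTerm hy).continuousAt.continuousWithinAt) ?_ ?_ <;>
  simp only [interior_Ioi, mem_Ioi]
  · exact fun y hy => (hasDerivAt_binetTerm hy).hasDerivWithinAt
  · exact fun y hy => by linarith [log_add_one_sub_log_le hy]

lemma convexOn_binetTerm : ConvexOn ℝ (Ioi 0) binetTerm := by
  refine convexOn_of_hasDerivWithinAt2_nonneg (convex_Ioi 0)
    (f' := fun y => log (y + 1) - log y - (y⁻¹ + (y + 1)⁻¹) / 2)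
    (f'' := fun y => (y⁻¹ - (y + 1)⁻¹) ^ 2 / 2)
    (fun y hy => (hasDerivAt_binetTerm hy).continuousAt.continuousWithinAt) ?_ ?_ ?_ <;>
  simp only [interior_Ioi, mem_Ioi]
  · exact fun y hy => (hasDerivAt_binetTerm hy).hasDerivWithinAt
  · exact fun y hy => (hasDerivAt_deriv_binetTerm hy).hasDerivWithinAt
  · exact fun y _ => by positivity

lemma monotoneOn_mul_log_add_one_sub_log :
    MonotoneOn (fun y => y * (log (y + 1) - log y)) (Ioi 0) := by
  have hderiv : ∀ y : ℝ, 0 < y → HasDerivAt (fun y => y * (log (y + 1) - log y))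
      (log (y + 1) - log y - (y + 1)⁻¹) y := fun y hy => by
    refine ((hasDerivAt_id' y).fun_mul (hasDerivAt_log_add_one_sub_log hy)).congr_deriv ?_
    field_simp
    ring
  refine monotoneOn_of_hasDerivWithinAt_nonneg (convex_Ioi 0)
    (f' := fun y => log (y + 1) - log y - (y + 1)⁻¹)
    (fun y hy => (hderiv y hy).continuousAt.continuousWithinAt) ?_ ?_ <;>
  simp only [interior_Ioi, mem_Ioi]
  · exact fun y hy => (hderiv y hy).hasDerivWithinAt
  · exact fun y hy => by linarith [inv_add_one_le_log_add_one_sub_log hy]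

end BinetTerm

lemma ConvexOn.tsum {E ι : Type*} [AddCommMonoid E] [Module ℝ E] {s : Set E} {f : ι → E → ℝ}
    (hs : Convex ℝ s) (hf : ∀ i, ConvexOn ℝ s (f i)) (hsum : ∀ x ∈ s, Summable fun i => f i x) :
    ConvexOn ℝ s fun x => ∑' i, f i x := by
  refine ⟨hs, fun x hx y hy a b ha hb hab => ?_⟩
  calc ∑' i, f i (a • x + b • y)
      ≤ ∑' i, (a * f i x + b * f i y) :=
        (hsum _ (hs hx hy ha hb hab)).tsum_le_tsum (fun i => (hf i).2 hx hy ha hb hab)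
          (((hsum x hx).mul_left a).add ((hsum y hy).mul_left b))
    _ = a • ∑' i, f i x + b • ∑' i, f i y := by
        rw [((hsum x hx).mul_left a).tsum_add ((hsum y hy).mul_left b), tsum_mul_left,
          tsum_mul_left, smul_eq_mul, smul_eq_mul]

noncomputable def binet (x : ℝ) : ℝ := ∑' n : ℕ, binetTerm (x + n)

section Binet

variable {x : ℝ}

lemma sum_range_binetTerm_le (hx : 0 < x) (N : ℕ) :
    ∑ n ∈ Finset.range N, binetTerm (x + n) ≤ (4 * x)⁻¹ := by
  set b : ℕ → ℝ := fun n => (4 * (x + n))⁻¹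
  calc ∑ n ∈ Finset.range N, binetTerm (x + n)
      ≤ ∑ n ∈ Finset.range N, (b n - b (n + 1)) := Finset.sum_le_sum fun n _ => by
        simpa [b, add_assoc] using binetTerm_le (show 0 < x + n by positivity)
    _ = b 0 - b N := Finset.sum_range_sub' b N
    _ ≤ b 0 := sub_le_self _ (inv_nonneg.mpr (by positivity))
    _ = (4 * x)⁻¹ := by simp [b]

lemma summable_binetTerm (hx : 0 < x) : Summable fun n : ℕ => binetTerm (x + n) :=
  summable_of_sum_range_le (fun _ => binetTerm_nonneg (by positivity)) (sum_range_binetTerm_le hx)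

lemma binet_nonneg (hx : 0 < x) : 0 ≤ binet x :=
  tsum_nonneg fun _ => binetTerm_nonneg (by positivity)

lemma binet_le (hx : 0 < x) : binet x ≤ (4 * x)⁻¹ :=
  Real.tsum_le_of_sum_range_le (fun _ => binetTerm_nonneg (by positivity))
    (sum_range_binetTerm_le hx)

lemma tendsto_binet_atTop : Tendsto binet atTop (𝓝 0) :=
  tendsto_of_tendsto_of_tendsto_of_le_of_le' tendsto_const_nhds
    (tendsto_inv_atTop_zero.comp (tendsto_id.const_mul_atTop four_pos))
    ((eventually_gt_atTop 0).mono fun _ hx => binet_nonneg hx)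
    ((eventually_gt_atTop 0).mono fun _ hx => binet_le hx)

lemma binet_eq_binetTerm_add (hx : 0 < x) : binet x = binetTerm x + binet (x + 1) := by
  rw [binet, (summable_binetTerm hx).tsum_eq_zero_add, binet]
  congr 1
  · simp
  · exact tsum_congr fun n => by push_cast; ring_nf

lemma antitoneOn_binet : AntitoneOn binet (Ioi 0) := by
  intro u hu s hs hus
  rw [mem_Ioi] at hu hs
  exact (summable_binetTerm hs).tsum_le_tsum
    (fun n => antitoneOn_binetTerm (by simp only [mem_Ioi]; positivity)
      (by simp only [mem_Ioi]; positivity) (by linarith))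
    (summable_binetTerm hu)

lemma convexOn_binet : ConvexOn ℝ (Ioi 0) binet := by
  refine ConvexOn.tsum (convex_Ioi 0) (fun n => ?_) fun x hx => summable_binetTerm hx
  exact (convexOn_binetTerm.translate_left (n : ℝ)).subset
    (fun y (hy : 0 < y) => show 0 < n + y by positivity) (convex_Ioi 0)

lemma sum_range_binetTerm_eq (N : ℕ) :
    ∑ n ∈ Finset.range N, binetTerm (x + n) =
      ∑ n ∈ Finset.range N, ((x + n) * (log (x + n + 1) - log (x + n)) - 1)
        + (log (x + N) - log x) / 2 := by
  have htel : ∑ n ∈ Finset.range N, (log (x + n + 1) - log (x + n)) = log (x + N) - log x := by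
    simpa [add_assoc] using Finset.sum_range_sub (fun n : ℕ => log (x + n)) N
  rw [← htel, Finset.sum_div, ← Finset.sum_add_distrib]
  exact Finset.sum_congr rfl fun n _ => by rw [binetTerm]; ring

-- Each partial sum plus `log x / 2` is a sum of increasing functions of `x` plus `log (x + N) / 2`.
lemma monotoneOn_binet_add_half_log : MonotoneOn (fun x => binet x + log x / 2) (Ioi 0) := by
  intro u hu s hs hus
  rw [mem_Ioi] at hu hs
  have hpartial : ∀ N : ℕ, ∑ n ∈ Finset.range N, binetTerm (u + n) + log u / 2
      ≤ ∑ n ∈ Finset.range N, binetTerm (s + n) + log s / 2 := fun N => by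
    have hterm := Finset.sum_le_sum fun n (_ : n ∈ Finset.range N) =>
      monotoneOn_mul_log_add_one_sub_log (show u + n ∈ Ioi 0 by simp only [mem_Ioi]; positivity)
        (show s + n ∈ Ioi 0 by simp only [mem_Ioi]; positivity) (by linarith)
    have hlog : log (u + N) ≤ log (s + N) := log_le_log (by positivity) (by linarith)
    simp only [sum_range_binetTerm_eq, Finset.sum_sub_distrib] at hterm ⊢
    linarith
  exact le_of_tendsto_of_tendsto' ((summable_binetTerm hu).hasSum.tendsto_sum_nat.add_const _)
    ((summable_binetTerm hs).hasSum.tendsto_sum_nat.add_const _) hpartial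

end Binet

noncomputable def stirlingLogGamma (x : ℝ) : ℝ := (x - 1 / 2) * log x - x + binet x

lemma stirlingLogGamma_add_one {x : ℝ} (hx : 0 < x) :
    stirlingLogGamma (x + 1) = log x + stirlingLogGamma x := by
  rw [stirlingLogGamma, stirlingLogGamma, binet_eq_binetTerm_add hx, binetTerm]
  ring

lemma convexOn_stirlingLogGamma : ConvexOn ℝ (Ioi 0) stirlingLogGamma := by
  have hmul_log : ConvexOn ℝ (Ioi 0) fun x => x * log x :=
    convexOn_mul_log.subset Ioi_subset_Ici_self (convex_Ioi 0)
  have hneg_log : ConvexOn ℝ (Ioi 0) fun x => (1 / 2 : ℝ) • -log x :=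
    strictConcaveOn_log_Ioi.concaveOn.neg.smul (by norm_num)
  refine (((hmul_log.add hneg_log).add (concaveOn_id (convex_Ioi 0)).neg).add
    convexOn_binet).congr fun x _ => ?_
  simp only [stirlingLogGamma, Pi.add_apply, Pi.neg_apply, id, smul_eq_mul]
  ring

theorem Gamma_eq_exp_stirlingLogGamma {x : ℝ} (hx : 0 < x) :
    Gamma x = exp (stirlingLogGamma x - stirlingLogGamma 1) := by
  refine (eq_Gamma_of_log_convex (f := fun x => exp (stirlingLogGamma x - stirlingLogGamma 1))
    ?_ (fun hy => ?_) (fun _ => exp_pos _) (by simp) hx).symm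
  · exact (convexOn_stirlingLogGamma.sub
      (concaveOn_const (stirlingLogGamma 1) (convex_Ioi 0))).congr fun x _ => by simp
  · rw [stirlingLogGamma_add_one hy, add_sub_assoc, exp_add, exp_log hy]

noncomputable def C₀ (l s : ℝ) : ℝ :=
  Gamma ((1 - l) * s) / Gamma s * (s / exp 1) ^ (l * s) * (1 - l) ^ (-((1 - l) * s))

lemma one_div_sqrt_eq_exp {c : ℝ} (hc : 0 < c) : 1 / √c = exp (-log c / 2) := by
  rw [sqrt_eq_rpow, rpow_def_of_pos hc, one_div, ← exp_neg]
  ring_nf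

section C₀

variable {l s : ℝ}

lemma C₀_eq_exp_binet (hl : l < 1) (hs : 0 < s) :
    C₀ l s = exp (-log (1 - l) / 2 + (binet ((1 - l) * s) - binet s)) := by
  have hc : 0 < 1 - l := by linarith
  rw [C₀, Gamma_eq_exp_stirlingLogGamma (by positivity), Gamma_eq_exp_stirlingLogGamma hs,
    ← exp_sub, rpow_def_of_pos (by positivity), rpow_def_of_pos hc, ← exp_add, ← exp_add,
    log_div hs.ne' (exp_pos 1).ne', log_exp]
  congr 1
  simp only [stirlingLogGamma, log_mul hc.ne' hs.ne']
  ring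

lemma one_div_sqrt_le_C₀ (hl0 : 0 ≤ l) (hl1 : l < 1) (hs : 0 < s) : 1 / √(1 - l) ≤ C₀ l s := by
  have hc : 0 < 1 - l := by linarith
  have hanti := antitoneOn_binet (show (1 - l) * s ∈ Ioi 0 from mul_pos hc hs) hs
    (mul_le_of_le_one_left hs.le (by linarith))
  rw [C₀_eq_exp_binet hl1 hs, one_div_sqrt_eq_exp hc, exp_le_exp]
  linarith

lemma C₀_le_one_div (hl0 : 0 ≤ l) (hl1 : l < 1) (hs : 0 < s) : C₀ l s ≤ 1 / (1 - l) := by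
  have hc : 0 < 1 - l := by linarith
  have hmono := monotoneOn_binet_add_half_log (show (1 - l) * s ∈ Ioi 0 from mul_pos hc hs) hs
    (mul_le_of_le_one_left hs.le (by linarith))
  simp only [log_mul hc.ne' hs.ne'] at hmono
  calc C₀ l s = exp (-log (1 - l) / 2 + (binet ((1 - l) * s) - binet s)) := C₀_eq_exp_binet hl1 hs
    _ ≤ exp (-log (1 - l)) := exp_le_exp.mpr (by linarith)
    _ = 1 / (1 - l) := by rw [exp_neg, exp_log hc, one_div]

lemma tendsto_C₀_atTop (hl : l < 1) : Tendsto (C₀ l) atTop (𝓝 (1 / √(1 - l))) := by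
  have hc : 0 < 1 - l := by linarith
  have hbinet : Tendsto (fun s => binet ((1 - l) * s) - binet s) atTop (𝓝 0) := by
    simpa using (tendsto_binet_atTop.comp (tendsto_id.const_mul_atTop hc)).sub tendsto_binet_atTop
  rw [one_div_sqrt_eq_exp hc]
  refine ((continuous_exp.tendsto _).comp ?_).congr'
    ((eventually_gt_atTop 0).mono fun s hs => (C₀_eq_exp_binet hl hs).symm)
  simpa using hbinet.const_add (-log (1 - l) / 2)

lemma C₀_eq_Gamma_add_one (hl : l < 1) (hs : 0 < s) :
    C₀ l s = Gamma ((1 - l) * s + 1) / Gamma (s + 1) / (1 - l)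
      * (s / exp 1) ^ (l * s) * (1 - l) ^ (-((1 - l) * s)) := by
  have hc : 0 < 1 - l := by linarith
  rw [C₀, Gamma_add_one (by positivity), Gamma_add_one hs.ne']
  field_simp

lemma tendsto_C₀_nhdsGT_zero (hl : l < 1) : Tendsto (C₀ l) (𝓝[>] 0) (𝓝 (1 / (1 - l))) := by
  have hc : 0 < 1 - l := by linarith
  have hGamma : Tendsto (fun x => Gamma (x + 1)) (𝓝 0) (𝓝 1) := by
    have hcont : ContinuousAt Gamma 1 := (differentiableAt_Gamma fun m =>
      (show -(m : ℝ) < 1 by linarith [m.cast_nonneg (α := ℝ)]).ne').continuousAt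
    have hshift : Tendsto (fun x : ℝ => x + 1) (𝓝 0) (𝓝 1) := by
      simpa using (continuous_add_const (1 : ℝ)).tendsto 0
    simpa [Function.comp_def] using hcont.tendsto.comp hshift
  have hid : Tendsto (fun s : ℝ => s) (𝓝[>] 0) (𝓝 0) := nhdsWithin_le_nhds
  have hratio := ((hGamma.comp (by simpa using hid.const_mul (1 - l))).div (hGamma.comp hid)
    one_ne_zero).div_const (1 - l)
  have hpow : Tendsto (fun s => (s / exp 1) ^ (l * s)) (𝓝[>] 0) (𝓝 1) := by
    have hexp : Tendsto (fun s => exp (l * (s * log s - s))) (𝓝[>] 0) (𝓝 1) := by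
      have hcont : Continuous fun s => exp (l * (s * log s - s)) := by
        fun_prop
      simpa using (hcont.tendsto 0).mono_left nhdsWithin_le_nhds
    refine hexp.congr' (eventually_mem_nhdsWithin.mono fun s (hs : 0 < s) => ?_)
    dsimp only
    rw [rpow_def_of_pos (by positivity), log_div hs.ne' (exp_pos 1).ne', log_exp]
    ring_nf
  have hpow' : Tendsto (fun s => (1 - l) ^ (-((1 - l) * s))) (𝓝[>] 0) (𝓝 1) := by
    have hcont : ContinuousAt (fun s => (1 - l) ^ (-((1 - l) * s))) 0 :=
      (continuousAt_const_rpow hc.ne').comp (by fun_prop)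
    simpa using hcont.tendsto.mono_left nhdsWithin_le_nhds
  have hlim := (hratio.mul hpow).mul hpow'
  rw [div_one, mul_one, mul_one] at hlim
  exact hlim.congr' (eventually_mem_nhdsWithin.mono fun s hs => (C₀_eq_Gamma_add_one hl hs).symm)

end C₀

/-- For `λ ∈ (0,1)` and `α > 0`,
`C₀(t,λ) = (Γ((1-λ)αt)/Γ(αt)) (αt/e)^{λαt} (1-λ)^{-(1-λ)αt}` satisfies
`C₀(t,λ) → 1/(1-λ)` as `t → 0⁺`, `C₀(t,λ) → 1/√(1-λ)` as `t → ∞`, and consequently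
`1/√(1-λ) ≤ C₀(t,λ) ≤ 1/(1-λ)` for all `t > 0`. -/
theorem stmt12 (l α : ℝ) (hl : l ∈ Set.Ioo (0:ℝ) 1) (hα : 0 < α) :
    let C0 : ℝ → ℝ := fun t => Real.Gamma ((1-l)*α*t)/Real.Gamma (α*t)
        * (α*t/Real.exp 1) ^ (l*α*t) * (1-l) ^ (-((1-l)*α*t))
    Filter.Tendsto C0 (nhdsWithin 0 (Set.Ioi 0)) (nhds (1/(1-l))) ∧
      Filter.Tendsto C0 Filter.atTop (nhds (1/Real.sqrt (1-l))) ∧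
      ∀ t, 0 < t → 1/Real.sqrt (1-l) ≤ C0 t ∧ C0 t ≤ 1/(1-l) := by
  intro C0
  obtain ⟨hl0, hl1⟩ := hl
  have hC0 : C0 = fun t => C₀ l (α * t) := by
    funext t
    simp only [C0, C₀, mul_assoc]
  have hscale : Tendsto (fun t => α * t) (𝓝[>] 0) (𝓝[>] 0) :=
    tendsto_nhdsWithin_iff.mpr
      ⟨by simpa using (tendsto_id.const_mul α).mono_left (nhdsWithin_le_nhds (a := (0 : ℝ))),
        eventually_mem_nhdsWithin.mono fun t (ht : 0 < t) => mul_pos hα ht⟩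
  rw [hC0]
  exact ⟨(tendsto_C₀_nhdsGT_zero hl1).comp hscale,
    (tendsto_C₀_atTop hl1).comp (tendsto_id.const_mul_atTop hα),
    fun t ht => ⟨one_div_sqrt_le_C₀ hl0.le hl1 (by positivity),
      C₀_le_one_div hl0.le hl1 (by positivity)⟩⟩
end
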